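/- For every uncountable cardinal κ > ω₁, every local club S ⊆ [κ]^ω is reflective. -/

import Mathlib

open Set Cardinal

noncomputable section

/-- The first uncountable ordinal `ω₁`. -/
def omega1 : Ordinal.{0} := (Cardinal.aleph 1).ord

/-- `x ∩ ω₁` is a countable ordinal. -/
def GoodSet (x : Set Ordinal.{0}) : Prop :=
  ∃ δ < omega1, x ∩ Set.Iio omega1 = Set.Iio δ

/-- `δ_x`: the countable ordinal `x ∩ ω₁`. -/
def delta (x : Set Ordinal.{0}) : Ordinal.{0} :=
  sInf {δ : Ordinal.{0} | x ∩ Set.Iio omega1 = Set.Iio δ}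

/-- The space `[X]^ω` of countable subsets of `X` (restricted, as in the paper,
to those `x` whose intersection with `ω₁` is a countable ordinal). -/
def countPow (X : Set Ordinal.{0}) : Set (Set Ordinal.{0}) :=
  {x | x ⊆ X ∧ x.Countable ∧ GoodSet x}

/-- `C` is club in `[X]^ω`: it is cofinal and closed under unions of countable
`⊆`-increasing chains. -/
def IsClubIn (X : Set Ordinal.{0}) (C : Set (Set Ordinal.{0})) : Prop :=
  C ⊆ countPow X ∧ (∀ x ∈ countPow X, ∃ y ∈ C, x ⊆ y) ∧
    ∀ D : Set (Set Ordinal.{0}), D ⊆ C → D.Countable → D.Nonempty →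
      IsChain (· ⊆ ·) D → ⋃₀ D ∈ C

/-- `S` is stationary in `[X]^ω`: it meets every club. -/
def IsStatIn (X : Set Ordinal.{0}) (S : Set (Set Ordinal.{0})) : Prop :=
  ∀ C, IsClubIn X C → (S ∩ C).Nonempty

/-- Club subsets of `ω₁` (closed unbounded in the ordinal `ω₁`). -/
def IsClubOmega1 (C : Set Ordinal.{0}) : Prop :=
  C ⊆ Set.Iio omega1 ∧ (∀ α < omega1, ∃ β ∈ C, α < β) ∧
    ∀ α < omega1, α ≠ 0 → (∀ β < α, ∃ γ ∈ C, β < γ ∧ γ < α) → α ∈ C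

/-- Stationary subsets of `ω₁`. -/
def IsStatOmega1 (A : Set Ordinal.{0}) : Prop :=
  ∀ C, IsClubOmega1 C → (A ∩ C).Nonempty

/-- A (continuous, `δ`-increasing) `ω₁`-chain: `⟨f α : α < ω₁⟩`. -/
def IsOmega1Chain (f : Ordinal.{0} → Set Ordinal.{0}) : Prop :=
  (∀ α β, α < β → β < omega1 → f α ⊆ f β) ∧
  (∀ β < omega1, Order.IsSuccLimit β → f β = ⋃ α ∈ Set.Iio β, f α) ∧
  (∀ α β, α < β → β < omega1 → delta (f α) < delta (f β))

/-- The space `[Y]^{ω₁}` of subsets of `Y` of cardinality `ℵ₁`. -/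
def aleph1Pow (Y : Set Ordinal.{0}) : Set (Set Ordinal.{0}) :=
  {X | X ⊆ Y ∧ Cardinal.mk X = Cardinal.aleph 1}

/-- `C` is club in `[Y]^{ω₁}`: cofinal and closed under unions of
`⊆`-increasing chains of length `ω₁`. -/
def IsClubAleph1 (Y : Set Ordinal.{0}) (C : Set (Set Ordinal.{0})) : Prop :=
  C ⊆ aleph1Pow Y ∧ (∀ X ∈ aleph1Pow Y, ∃ Z ∈ C, X ⊆ Z) ∧
    ∀ f : Ordinal.{0} → Set Ordinal.{0}, (∀ α β, α < β → β < omega1 → f α ⊆ f β) →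
      (∀ α < omega1, f α ∈ C) → (⋃ α ∈ Set.Iio omega1, f α) ∈ C

/-- `S` is a local club in `[Y]^ω`: the set of `X ∈ [Y]^{ω₁}` such that
`S ∩ [X]^ω` contains a club in `[X]^ω` contains a club in `[Y]^{ω₁}`. -/
def IsLocalClub (Y : Set Ordinal.{0}) (S : Set (Set Ordinal.{0})) : Prop :=
  ∃ C, IsClubAleph1 Y C ∧ ∀ X ∈ C, ∃ D, IsClubIn X D ∧ D ⊆ S

/-- `S` is projective stationary in `[X]^ω`. -/
def ProjStationary (X : Set Ordinal.{0}) (S : Set (Set Ordinal.{0})) : Prop :=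
  ∀ A ⊆ Set.Iio omega1, IsStatOmega1 A → IsStatIn X {x ∈ S | delta x ∈ A}

/-- `S ⊆ [κ]^ω` is spanning. -/
def IsSpanning (κ : Cardinal) (S : Set (Set Ordinal.{0})) : Prop :=
  ∀ lam : Cardinal, κ ≤ lam → ∀ C, IsClubIn (Set.Iio lam.ord) C →
    ∃ D, IsClubIn (Set.Iio lam.ord) D ∧
      ∀ x ∈ D, ∃ y ∈ C, x ⊆ y ∧ delta x = delta y ∧ (y ∩ Set.Iio κ.ord) ∈ S

/-- `S ⊆ [X]^ω` is reflective: for every club `C`, `S ∩ C` contains an `ω₁`-chain. -/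
def IsReflective (X : Set Ordinal.{0}) (S : Set (Set Ordinal.{0})) : Prop :=
  ∀ C, IsClubIn X C → ∃ f, IsOmega1Chain f ∧ ∀ α < omega1, f α ∈ S ∩ C

/-- `S ⊆ [X]^ω` is full. -/
def IsFull (X : Set Ordinal.{0}) (S : Set (Set Ordinal.{0})) : Prop :=
  ∀ A ⊆ Set.Iio omega1, IsStatOmega1 A →
    ∃ B, B ⊆ A ∧ IsStatOmega1 B ∧ ∃ C, IsClubIn X C ∧ {x ∈ C | delta x ∈ B} ⊆ S

/-- The order type of a set of ordinals. -/
def otp (s : Set Ordinal.{0}) : Ordinal.{0} :=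
  sInf {o : Ordinal.{0} | Nonempty (↥s ≃o ↥(Set.Iio o))}

/-- The nonstationary ideal on `ω₁` is saturated. -/
def NSSaturated : Prop :=
  ∀ W : Set (Set Ordinal.{0}), (∀ A ∈ W, A ⊆ Set.Iio omega1 ∧ IsStatOmega1 A) →
    (∀ A ∈ W, ∀ B ∈ W, A ≠ B → ¬ IsStatOmega1 (A ∩ B)) →
    Cardinal.mk W ≤ Cardinal.aleph 1

lemma omega1_isLimit : Order.IsSuccLimit omega1 := Cardinal.isSuccLimit_ord (aleph0_le_aleph 1)

lemma omega1_pos : 0 < omega1 := omega1_isLimit.pos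

lemma Iio_inj {a b : Ordinal.{0}} (h : Set.Iio a = Set.Iio b) : a = b := by
  by_contra hne
  rcases lt_or_gt_of_ne hne with h1 | h1
  · have : a ∈ Set.Iio b := h1
    rw [← h] at this; exact lt_irrefl a this
  · have : b ∈ Set.Iio a := h1
    rw [h] at this; exact lt_irrefl b this

lemma delta_eq {x : Set Ordinal.{0}} {δ : Ordinal.{0}}
    (h : x ∩ Set.Iio omega1 = Set.Iio δ) : delta x = δ := by
  have : {δ' : Ordinal.{0} | x ∩ Set.Iio omega1 = Set.Iio δ'} = {δ} := by
    ext δ'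
    simp only [Set.mem_setOf_eq, Set.mem_singleton_iff]
    constructor
    · intro h'; exact Iio_inj (h ▸ h').symm ▸ rfl
    · rintro rfl; exact h
  rw [delta, this, csInf_singleton]

lemma good_inter {x : Set Ordinal.{0}} (hx : GoodSet x) :
    x ∩ Set.Iio omega1 = Set.Iio (delta x) := by
  obtain ⟨δ, _, h⟩ := hx; rw [delta_eq h]; exact h

lemma delta_lt {x : Set Ordinal.{0}} (hx : GoodSet x) : delta x < omega1 := by
  obtain ⟨δ, hδ, h⟩ := hx; rw [delta_eq h]; exact hδ

lemma delta_mono {x y : Set Ordinal.{0}} (hx : GoodSet x) (hy : GoodSet y)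
    (h : x ⊆ y) : delta x ≤ delta y := by
  have h1 := good_inter hx; have h2 := good_inter hy
  have : Set.Iio (delta x) ⊆ Set.Iio (delta y) := by
    rw [← h1, ← h2]; exact inter_subset_inter_left _ h
  simpa using this

lemma delta_ge {y : Set Ordinal.{0}} {δ : Ordinal.{0}} (hy : GoodSet y)
    (hδ : δ < omega1) (h : Set.Iio δ ⊆ y) : δ ≤ delta y := by
  have : Set.Iio δ ⊆ Set.Iio (delta y) := by
    rw [← good_inter hy]
    exact fun u hu => ⟨h hu, lt_trans hu hδ⟩
  simpa using this

lemma bound_lemma {s : Set Ordinal.{0}} (hc : s.Countable) (hs : s ⊆ Set.Iio omega1) :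
    ∃ b < omega1, ∀ u ∈ s, u < b := by
  rcases s.eq_empty_or_nonempty with rfl | hne
  · exact ⟨0, omega1_pos, by simp⟩
  · obtain ⟨f, rfl⟩ := hc.exists_eq_range hne
    refine ⟨iSup (fun n => f n + 1), ?_, ?_⟩
    · have := fun n => omega1_isLimit.succ_lt (hs ⟨n, rfl⟩)
      simp only [omega1, Cardinal.ord_aleph] at this ⊢
      exact Ordinal.iSup_lt_omega_one this
    · rintro u ⟨n, rfl⟩
      exact lt_of_lt_of_le (lt_add_one _) (Ordinal.le_iSup _ n)

lemma countable_Iio {α : Ordinal.{0}} (h : α < omega1) : (Set.Iio α).Countable := by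
  rw [← Set.countable_coe_iff]
  rw [← Cardinal.mk_le_aleph0_iff]
  rw [Ordinal.mk_Iio_ordinal]
  have h1 : α.card < Cardinal.aleph 1 := by
    rwa [← Cardinal.lt_ord]
  have h2 : α.card ≤ Cardinal.aleph0 := by
    rwa [← Cardinal.succ_aleph0, Order.lt_succ_iff] at h1
  calc Cardinal.lift.{1} α.card ≤ Cardinal.lift.{1} Cardinal.aleph0 := by
        exact Cardinal.lift_le.2 h2
    _ = Cardinal.aleph0 := by simp

lemma mk_Iio_omega1 : Cardinal.mk ↥(Set.Iio omega1) = Cardinal.aleph 1 := by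
  rw [Ordinal.mk_Iio_ordinal]
  show Cardinal.lift.{1} ((Cardinal.aleph 1).ord).card = _
  rw [Cardinal.card_ord, Cardinal.lift_aleph]
  simp

/-- pad: extend a countable set to a good set, forcing delta above η -/

lemma pad_lemma (z : Set Ordinal.{0}) (hz : z.Countable) (η : Ordinal.{0}) (hη : η < omega1) :
    ∃ δ, η < δ ∧ δ < omega1 ∧ (z ∪ Set.Iio δ) ∩ Set.Iio omega1 = Set.Iio δ := by
  obtain ⟨b, hb, hbs⟩ := bound_lemma (hz.mono (inter_subset_left (t := Set.Iio omega1)))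
    (inter_subset_right)
  refine ⟨max b (η + 1), ?_, ?_, ?_⟩
  · exact lt_of_lt_of_le (lt_add_one η) (le_max_right _ _)
  · exact max_lt hb (omega1_isLimit.succ_lt hη)
  · have hδω : max b (η+1) ≤ omega1 := le_of_lt (max_lt hb (omega1_isLimit.succ_lt hη))
    ext u
    simp only [Set.mem_inter_iff, Set.mem_union, Set.mem_Iio]
    constructor
    · rintro ⟨hu1 | hu1, hu2⟩
      · exact lt_of_lt_of_le (hbs u ⟨hu1, hu2⟩) (le_max_left _ _)
      · exact hu1
    · intro hu
      exact ⟨Or.inr hu, lt_of_lt_of_le hu hδω⟩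

lemma club_inter {X : Set Ordinal.{0}} {A B : Set (Set Ordinal.{0})}
    (hA : IsClubIn X A) (hB : IsClubIn X B) : IsClubIn X (A ∩ B) := by
  obtain ⟨hA1, hA2, hA3⟩ := hA
  obtain ⟨hB1, hB2, hB3⟩ := hB
  refine ⟨fun y hy => hA1 hy.1, ?_, fun D hD hc hne hch => ⟨hA3 D (fun y hy => (hD hy).1) hc hne hch,
    hB3 D (fun y hy => (hD hy).2) hc hne hch⟩⟩
  intro x hx
  classical
  -- choice functions
  have hFA : ∀ z : Set Ordinal.{0}, ∃ y, z ∈ countPow X → y ∈ A ∧ z ⊆ y := by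
    intro z
    by_cases hz : z ∈ countPow X
    · obtain ⟨y, hy1, hy2⟩ := hA2 z hz; exact ⟨y, fun _ => ⟨hy1, hy2⟩⟩
    · exact ⟨∅, fun h => absurd h hz⟩
  have hFB : ∀ z : Set Ordinal.{0}, ∃ y, z ∈ countPow X → y ∈ B ∧ z ⊆ y := by
    intro z
    by_cases hz : z ∈ countPow X
    · obtain ⟨y, hy1, hy2⟩ := hB2 z hz; exact ⟨y, fun _ => ⟨hy1, hy2⟩⟩
    · exact ⟨∅, fun h => absurd h hz⟩
  choose fA hfA using hFA
  choose fB hfB using hFB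
  set g : ℕ → Set Ordinal.{0} := fun n => Nat.rec (fA x) (fun n y => if n % 2 = 0 then fB y else fA y) n with hg
  have hg0 : g 0 = fA x := rfl
  have hgs : ∀ n, g (n+1) = if n % 2 = 0 then fB (g n) else fA (g n) := fun n => rfl
  -- basic invariant
  have key : ∀ n, g n ∈ countPow X ∧ (n % 2 = 0 → g n ∈ A) ∧ (n % 2 = 1 → g n ∈ B) ∧ g n ⊆ g (n+1) := by
    intro n
    induction n with
    | zero =>
      have h0 := hfA x hx
      refine ⟨hA1 h0.1, fun _ => h0.1, by simp, ?_⟩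
      rw [hgs 0]; simp only [Nat.zero_mod, if_pos rfl]
      exact (hfB _ (hA1 h0.1)).2
    | succ n ih =>
      obtain ⟨hcp, hev, hod, hsub⟩ := ih
      rcases Nat.even_or_odd n with he | ho
      · have hn : n % 2 = 0 := Nat.even_iff.1 he
        have h1 : g (n+1) = fB (g n) := by rw [hgs n, if_pos hn]
        have h2 := hfB (g n) hcp
        have hmem : g (n+1) ∈ B := h1 ▸ h2.1
        have hcp1 : g (n+1) ∈ countPow X := hB1 hmem
        have hn1 : (n+1) % 2 = 1 := by omega
        refine ⟨hcp1, fun h => by omega, fun _ => hmem, ?_⟩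
        rw [hgs (n+1), if_neg (by omega)]
        exact (hfA _ hcp1).2
      · have hn : n % 2 = 1 := Nat.odd_iff.1 ho
        have h1 : g (n+1) = fA (g n) := by rw [hgs n, if_neg (by omega)]
        have h2 := hfA (g n) hcp
        have hmem : g (n+1) ∈ A := h1 ▸ h2.1
        have hcp1 : g (n+1) ∈ countPow X := hA1 hmem
        refine ⟨hcp1, fun _ => hmem, fun h => by omega, ?_⟩
        rw [hgs (n+1), if_pos (by omega)]
        exact (hfB _ hcp1).2
  have mono : ∀ m n, m ≤ n → g m ⊆ g n := by
    intro m n h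
    induction n with
    | zero => simp_all
    | succ n ih =>
      rcases Nat.lt_or_ge m (n+1) with h1 | h1
      · exact subset_trans (ih (by omega)) (key n).2.2.2
      · have : m = n + 1 := by omega
        subst this; rfl
  set U : Set Ordinal.{0} := ⋃ n, g n with hU
  have hUeq : ∀ P : ℕ → Prop, (∀ n, ∃ m, n ≤ m ∧ P m) → ⋃₀ (g '' {n | P n}) = U := by
    intro P hP
    apply subset_antisymm
    · rintro u ⟨t, ⟨n, _, rfl⟩, hu⟩
      exact Set.mem_iUnion.2 ⟨n, hu⟩
    · rintro u hu
      obtain ⟨n, hn⟩ := Set.mem_iUnion.1 hu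
      obtain ⟨m, hm1, hm2⟩ := hP n
      exact ⟨g m, ⟨m, hm2, rfl⟩, mono n m hm1 hn⟩
  have himg : ∀ P : ℕ → Prop, (∃ n, P n) → (∀ n, P n → g n ∈ A ∪ B) →
      (g '' {n | P n}).Countable ∧ (g '' {n | P n}).Nonempty ∧ IsChain (· ⊆ ·) (g '' {n | P n}) := by
    intro P ⟨n0, hn0⟩ _
    refine ⟨(Set.to_countable _).image g, ⟨g n0, ⟨n0, hn0, rfl⟩⟩, ?_⟩
    rintro _ ⟨m, _, rfl⟩ _ ⟨n, _, rfl⟩ _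
    rcases le_or_gt m n with h | h
    · exact Or.inl (mono m n h)
    · exact Or.inr (mono n m (le_of_lt h))
  have hUA : U ∈ A := by
    obtain ⟨h1, h2, h3⟩ := himg (fun n => n % 2 = 0) ⟨0, rfl⟩ (fun n h => Or.inl ((key n).2.1 h))
    have := hA3 _ (fun y => by rintro ⟨n, hn, rfl⟩; exact (key n).2.1 hn) h1 h2 h3
    rwa [hUeq (fun n => n % 2 = 0) (fun n => ⟨2*n, by omega, by omega⟩)] at this
  have hUB : U ∈ B := by
    obtain ⟨h1, h2, h3⟩ := himg (fun n => n % 2 = 1) ⟨1, rfl⟩ (fun n h => Or.inr ((key n).2.2.1 h))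
    have := hB3 _ (fun y => by rintro ⟨n, hn, rfl⟩; exact (key n).2.2.1 hn) h1 h2 h3
    rwa [hUeq (fun n => n % 2 = 1) (fun n => ⟨2*n+1, by omega, by omega⟩)] at this
  exact ⟨U, ⟨hUA, hUB⟩, subset_trans (hfA x hx).2 (Set.subset_iUnion g 0)⟩

lemma bound_fun {ι : Type*} [Countable ι] (F : ι → Ordinal.{0}) (h : ∀ i, F i < omega1) :
    ∃ b, b < omega1 ∧ ∀ i, F i < b := by
  obtain ⟨b, hb, hbs⟩ := bound_lemma (Set.countable_range F)
    (by rintro u ⟨i, rfl⟩; exact h i)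
  exact ⟨b, hb, fun i => hbs _ ⟨i, rfl⟩⟩

lemma exists_chain_of_club {X : Set Ordinal.{0}} {E : Set (Set Ordinal.{0})}
    (hE : IsClubIn X E) (hIio : Set.Iio omega1 ⊆ X) :
    ∃ f, IsOmega1Chain f ∧ ∀ α < omega1, f α ∈ E := by
  classical
  obtain ⟨hE1, hE2, hE3⟩ := hE
  set Q : (α : Ordinal.{0}) → ((β : Ordinal.{0}) → β < α → Set Ordinal.{0}) → Set Ordinal.{0} → Prop :=
    fun α h y => y ∈ E ∧ ∀ β (hβ : β < α), (h β hβ ⊆ y ∧ delta (h β hβ) < delta y) with hQ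
  set G : (α : Ordinal.{0}) → ((β : Ordinal.{0}) → β < α → Set Ordinal.{0}) → Set Ordinal.{0} :=
    fun α h => if Order.IsSuccLimit α then ⋃ β, ⋃ (hβ : β < α), h β hβ
      else if hex : ∃ y, Q α h y then hex.choose else ∅ with hG
  set f : Ordinal.{0} → Set Ordinal.{0} := Ordinal.lt_wf.fix G with hf
  have hfeq : ∀ α, f α = G α (fun β _ => f β) := fun α => Ordinal.lt_wf.fix_eq G α
  have hlim : ∀ α : Ordinal.{0}, Order.IsSuccLimit α → f α = ⋃ β ∈ Set.Iio α, f β := by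
    intro α hα
    rw [hfeq α, hG]
    simp only [if_pos hα]
    rfl
  -- main induction
  have main : ∀ α, α < omega1 → f α ∈ E ∧ ∀ β, β < α → f β ⊆ f α ∧ delta (f β) < delta (f α) := by
    intro α
    induction α using Ordinal.induction with
    | h α IH =>
      intro hα
      by_cases hαl : Order.IsSuccLimit α
      · have heq := hlim α hαl
        have hDsub : f '' (Set.Iio α) ⊆ E := by
          rintro _ ⟨β, hβ, rfl⟩; exact (IH β hβ (lt_trans hβ hα)).1
        have hchain : IsChain (· ⊆ ·) (f '' Set.Iio α) := by
          rintro _ ⟨β, hβ, rfl⟩ _ ⟨γ, hγ, rfl⟩ _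
          rcases lt_trichotomy β γ with h | h | h
          · exact Or.inl ((IH γ hγ (lt_trans hγ hα)).2 β h).1
          · subst h; exact Or.inl (subset_refl _)
          · exact Or.inr ((IH β hβ (lt_trans hβ hα)).2 γ h).1
        have hUn : ⋃₀ (f '' Set.Iio α) = f α := by
          rw [heq, Set.sUnion_image]
        have hmem : f α ∈ E := by
          rw [← hUn]
          exact hE3 _ hDsub ((countable_Iio hα).image f)
            ⟨f 0, ⟨0, hαl.pos, rfl⟩⟩ hchain
        refine ⟨hmem, fun β hβ => ?_⟩
        have hβ1 : β + 1 < α := hαl.succ_lt hβ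
        have hsub : f β ⊆ f α := by
          rw [heq]; exact subset_trans (subset_refl _)
            (Set.subset_biUnion_of_mem (u := f) hβ)
        refine ⟨hsub, ?_⟩
        have h1 : delta (f β) < delta (f (β + 1)) :=
          ((IH (β+1) hβ1 (lt_trans hβ1 hα)).2 β (lt_add_one β)).2
        have h2 : delta (f (β+1)) ≤ delta (f α) := by
          apply delta_mono (hE1 (IH (β+1) hβ1 (lt_trans hβ1 hα)).1).2.2
            (hE1 hmem).2.2
          rw [heq]; exact Set.subset_biUnion_of_mem (u := f) hβ1
        exact lt_of_lt_of_le h1 h2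
      · -- successor or zero: existence
        have hIioc := countable_Iio hα
        have hgood : ∀ β, β < α → f β ∈ countPow X := fun β hβ => hE1 (IH β hβ (lt_trans hβ hα)).1
        have hex : ∃ y, Q α (fun β _ => f β) y := by
          set z : Set Ordinal.{0} := ⋃ β ∈ Set.Iio α, f β with hz
          have hzc : z.Countable := Set.Countable.biUnion hIioc (fun β hβ => (hgood β hβ).2.1)
          have hzX : z ⊆ X := Set.iUnion₂_subset fun β hβ => (hgood β hβ).1
          have hsubc := hIioc.to_subtype
          obtain ⟨b, hb, hbs⟩ := bound_fun (fun β : ↥(Set.Iio α) => delta (f β))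
            (fun β => delta_lt (hgood β β.2).2.2)
          obtain ⟨δ, hbδ, hδω, hgoodδ⟩ := pad_lemma z hzc b hb
          have hIioδ : Set.Iio δ ⊆ X := fun u hu => hIio (lt_trans hu hδω)
          have hz' : z ∪ Set.Iio δ ∈ countPow X :=
            ⟨Set.union_subset hzX hIioδ, hzc.union (countable_Iio hδω), ⟨δ, hδω, hgoodδ⟩⟩
          obtain ⟨y, hy1, hy2⟩ := hE2 _ hz'
          refine ⟨y, hy1, fun β hβ => ?_⟩
          have hfβ : f β ⊆ y := subset_trans (Set.subset_biUnion_of_mem (u := f) hβ)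
            (subset_trans Set.subset_union_left hy2)
          refine ⟨hfβ, ?_⟩
          have h1 : delta (f β) < b := hbs ⟨β, hβ⟩
          have h2 : δ ≤ delta y := delta_ge (hE1 hy1).2.2 hδω
            (subset_trans Set.subset_union_right hy2)
          exact lt_of_lt_of_le (lt_trans h1 hbδ) h2
        rw [hfeq α, hG]
        simp only [if_neg hαl, dif_pos hex]
        have hy := hex.choose_spec
        refine ⟨hy.1, fun β hβ => ⟨(hy.2 β hβ).1, (hy.2 β hβ).2⟩⟩
  refine ⟨f, ⟨fun α β hab hb => ((main β hb).2 α hab).1,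
    fun β hb hbl => hlim β hbl,
    fun α β hab hb => ((main β hb).2 α hab).2⟩, fun α hα => (main α hα).1⟩

lemma phase1 {κord : Ordinal.{0}} (hκ : omega1 < κord) {C Ccl : Set (Set Ordinal.{0})}
    (hC : IsClubIn (Set.Iio κord) C) (hCcl : IsClubAleph1 (Set.Iio κord) Ccl) :
    ∃ X ∈ Ccl, Set.Iio omega1 ⊆ X ∧ IsClubIn X (C ∩ countPow X) := by
  classical
  obtain ⟨hC1, hC2, hC3⟩ := hC
  obtain ⟨hK1, hK2, hK3⟩ := hCcl
  have hIioK : Set.Iio omega1 ⊆ Set.Iio κord := fun u hu => lt_trans hu hκ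
  set V := Set Ordinal.{0} × Set Ordinal.{0} × (Ordinal.{0} → Ordinal.{0}) with hV
  set P : (α : Ordinal.{0}) → ((β : Ordinal.{0}) → β < α → V) → V → Prop :=
    fun α h v =>
      v.1 ∈ C ∧
      (∀ β (hβ : β < α), (h β hβ).1 ⊆ v.1) ∧
      (∀ β (hβ : β < α), ∀ ξ, ξ < α → (h β hβ).2.2 ξ ∈ v.1) ∧
      v.2.1 ∈ Ccl ∧
      (∀ β (hβ : β < α), (h β hβ).2.1 ⊆ v.2.1) ∧
      v.1 ⊆ v.2.1 ∧ Set.Iio omega1 ⊆ v.2.1 ∧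
      v.2.2 '' (Set.Iio omega1) = v.2.1 with hP
  set G : (α : Ordinal.{0}) → ((β : Ordinal.{0}) → β < α → V) → V :=
    fun α h => if hex : ∃ v, P α h v then hex.choose else (∅, ∅, fun _ => 0) with hG
  set g : Ordinal.{0} → V := Ordinal.lt_wf.fix G with hg
  have hgeq : ∀ α, g α = G α (fun β _ => g β) := fun α => Ordinal.lt_wf.fix_eq G α
  have main : ∀ α, α < omega1 → P α (fun β _ => g β) (g α) := by
    intro α
    induction α using Ordinal.induction with
    | h α IH =>
      intro hα
      have hIioc := countable_Iio hα
      have hex : ∃ v, P α (fun β _ => g β) v := by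
        -- the x-part
        set z0 : Set Ordinal.{0} := ⋃ β ∈ Set.Iio α, (g β).1 with hz0
        set z1 : Set Ordinal.{0} :=
          (fun p : Ordinal.{0} × Ordinal.{0} => (g p.1).2.2 p.2) '' (Set.Iio α ×ˢ Set.Iio α) with hz1
        have hz0c : z0.Countable :=
          Set.Countable.biUnion hIioc (fun β hβ => (hC1 (IH β hβ (lt_trans hβ hα)).1).2.1)
        have hz1c : z1.Countable := (hIioc.prod hIioc).image _
        have hz0K : z0 ⊆ Set.Iio κord :=
          Set.iUnion₂_subset fun β hβ => (hC1 (IH β hβ (lt_trans hβ hα)).1).1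
        have hz1K : z1 ⊆ Set.Iio κord := by
          rintro _ ⟨⟨β, ξ⟩, ⟨hβ, hξ⟩, rfl⟩
          have hP8 := (IH β hβ (lt_trans hβ hα)).2.2.2.2.2.2.2
          have hYK := (hK1 (IH β hβ (lt_trans hβ hα)).2.2.2.1).1
          apply hYK
          rw [← hP8]
          exact ⟨ξ, lt_trans hξ hα, rfl⟩
        obtain ⟨δ, _, hδω, hgoodδ⟩ := pad_lemma (z0 ∪ z1) (hz0c.union hz1c) 0 omega1_pos
        have hz' : (z0 ∪ z1) ∪ Set.Iio δ ∈ countPow (Set.Iio κord) :=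
          ⟨Set.union_subset (Set.union_subset hz0K hz1K)
            (fun u hu => hIioK (lt_trans hu hδω)),
           (hz0c.union hz1c).union (countable_Iio hδω), ⟨δ, hδω, hgoodδ⟩⟩
        obtain ⟨x, hxC, hxz⟩ := hC2 _ hz'
        -- the Y-part
        set U : Set Ordinal.{0} := ⋃ β ∈ Set.Iio α, (g β).2.1 with hU
        set W : Set Ordinal.{0} := (x ∪ Set.Iio omega1) ∪ U with hW
        have hWK : W ⊆ Set.Iio κord := by
          refine Set.union_subset (Set.union_subset (hC1 hxC).1 hIioK) ?_
          exact Set.iUnion₂_subset fun β hβ => (hK1 (IH β hβ (lt_trans hβ hα)).2.2.2.1).1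
        have hWmk : Cardinal.mk ↥W = Cardinal.aleph 1 := by
          apply le_antisymm
          · have h1 : Cardinal.mk ↥W ≤ Cardinal.mk ↥(x ∪ Set.Iio omega1) + Cardinal.mk ↥U :=
              Cardinal.mk_union_le _ _
            have h2 : Cardinal.mk ↥(x ∪ Set.Iio omega1) ≤ Cardinal.mk ↥x + Cardinal.mk ↥(Set.Iio omega1) :=
              Cardinal.mk_union_le _ _
            have hx : Cardinal.mk ↥x ≤ Cardinal.aleph 1 := by
              have := (hC1 hxC).2.1.to_subtype
              exact le_trans Cardinal.mk_le_aleph0 (le_of_lt Cardinal.aleph0_lt_aleph_one)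
            have hUle : Cardinal.mk ↥U ≤ Cardinal.aleph 1 := by
              rw [hU, Set.biUnion_eq_iUnion]
              have hsub := hIioc.to_subtype
              calc Cardinal.mk ↥(⋃ (β : ↥(Set.Iio α)), (g β.1).2.1)
                  ≤ Cardinal.sum (fun β : ↥(Set.Iio α) => Cardinal.mk ↥((g β.1).2.1)) :=
                    Cardinal.mk_iUnion_le_sum_mk
                _ ≤ Cardinal.sum (fun _ : ↥(Set.Iio α) => Cardinal.aleph 1) := by
                    apply Cardinal.sum_le_sum
                    intro β
                    exact le_of_eq (hK1 (IH β.1 β.2 (lt_trans β.2 hα)).2.2.2.1).2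
                _ = Cardinal.mk ↥(Set.Iio α) * Cardinal.aleph 1 := Cardinal.sum_const' _ _
                _ ≤ Cardinal.aleph 1 * Cardinal.aleph 1 := by
                    apply mul_le_mul'
                    · exact le_trans Cardinal.mk_le_aleph0 (le_of_lt Cardinal.aleph0_lt_aleph_one)
                    · exact le_refl _
                _ = Cardinal.aleph 1 := Cardinal.mul_eq_self (aleph0_le_aleph 1)
            calc Cardinal.mk ↥W ≤ (Cardinal.mk ↥x + Cardinal.mk ↥(Set.Iio omega1)) + Cardinal.mk ↥U := by
                  exact le_trans h1 (add_le_add_left h2 _)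
              _ ≤ (Cardinal.aleph 1 + Cardinal.aleph 1) + Cardinal.aleph 1 := by
                  apply add_le_add (add_le_add hx (le_of_eq mk_Iio_omega1)) hUle
              _ = Cardinal.aleph 1 := by
                  rw [Cardinal.add_eq_self (aleph0_le_aleph 1), Cardinal.add_eq_self (aleph0_le_aleph 1)]
          · rw [← mk_Iio_omega1]
            apply Cardinal.mk_le_mk_of_subset
            exact subset_trans Set.subset_union_right Set.subset_union_left
        obtain ⟨Y, hYCcl, hWY⟩ := hK2 W ⟨hWK, hWmk⟩
        -- enumeration of Y
        have hmkY : Cardinal.mk ↥(Set.Iio omega1) = Cardinal.mk ↥Y := by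
          rw [mk_Iio_omega1, (hK1 hYCcl).2]
        obtain ⟨eqv⟩ := Cardinal.eq.1 hmkY
        set e : Ordinal.{0} → Ordinal.{0} := fun o =>
          if ho : o < omega1 then ((eqv ⟨o, ho⟩ : ↥Y) : Ordinal.{0})
          else ((eqv ⟨0, omega1_pos⟩ : ↥Y) : Ordinal.{0}) with he
        have heY : e '' (Set.Iio omega1) = Y := by
          ext u
          constructor
          · rintro ⟨o, ho, rfl⟩
            have heo : e o = ((eqv ⟨o, ho⟩ : ↥Y) : Ordinal.{0}) := dif_pos ho
            rw [heo]; exact (eqv ⟨o, ho⟩).2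
          · intro hu
            refine ⟨((eqv.symm ⟨u, hu⟩ : ↥(Set.Iio omega1)) : Ordinal.{0}),
              (eqv.symm ⟨u, hu⟩).2, ?_⟩
            have heo : e ((eqv.symm ⟨u, hu⟩ : ↥(Set.Iio omega1)) : Ordinal.{0}) =
                ((eqv ⟨((eqv.symm ⟨u, hu⟩ : ↥(Set.Iio omega1)) : Ordinal.{0}),
                  (eqv.symm ⟨u, hu⟩).2⟩ : ↥Y) : Ordinal.{0}) := dif_pos (eqv.symm ⟨u, hu⟩).2
            rw [heo, Subtype.coe_eta, Equiv.apply_symm_apply]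
        refine ⟨(x, Y, e), hxC, ?_, ?_, hYCcl, ?_, ?_, ?_, heY⟩
        · intro β hβ
          exact subset_trans (Set.subset_biUnion_of_mem (u := fun β => (g β).1) hβ)
            (subset_trans (subset_trans Set.subset_union_left Set.subset_union_left) hxz)
        · intro β hβ ξ hξ
          apply hxz
          exact Or.inl (Or.inr ⟨⟨β, ξ⟩, ⟨hβ, hξ⟩, rfl⟩)
        · intro β hβ
          refine subset_trans ?_ hWY
          refine subset_trans (Set.subset_biUnion_of_mem (u := fun β => (g β).2.1) hβ) ?_
          exact Set.subset_union_right
        · exact subset_trans (subset_trans Set.subset_union_left Set.subset_union_left) hWY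
        · exact subset_trans (subset_trans Set.subset_union_right Set.subset_union_left) hWY
      rw [hgeq α, hG]
      simp only [dif_pos hex]
      exact hex.choose_spec
  -- assemble X
  set X : Set Ordinal.{0} := ⋃ α ∈ Set.Iio omega1, (g α).2.1 with hX
  have hXCcl : X ∈ Ccl := by
    apply hK3 (fun α => (g α).2.1)
    · intro α β hab hb
      exact (main β hb).2.2.2.2.1 α hab
    · intro α hα
      exact (main α hα).2.2.2.1
  have hIioX : Set.Iio omega1 ⊆ X := by
    refine subset_trans (main 0 omega1_pos).2.2.2.2.2.2.1 ?_
    exact Set.subset_biUnion_of_mem (u := fun α => (g α).2.1) omega1_pos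
  have hxX : ∀ γ, γ < omega1 → (g γ).1 ⊆ X := by
    intro γ hγ
    exact subset_trans (main γ hγ).2.2.2.2.2.1
      (Set.subset_biUnion_of_mem (u := fun α => (g α).2.1) hγ)
  have hxmono : ∀ β γ, β < γ → γ < omega1 → (g β).1 ⊆ (g γ).1 := by
    intro β γ hβγ hγ
    exact (main γ hγ).2.1 β hβγ
  have capture : ∀ u ∈ X, ∃ γ, γ < omega1 ∧ u ∈ (g γ).1 := by
    rintro u hu
    obtain ⟨β, hβ, hu⟩ := Set.mem_iUnion₂.1 hu
    rw [← (main β hβ).2.2.2.2.2.2.2] at hu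
    obtain ⟨ξ, hξ, rfl⟩ := hu
    set γ := max β ξ + 1 with hγdef
    have hγ : γ < omega1 := omega1_isLimit.succ_lt (max_lt hβ hξ)
    refine ⟨γ, hγ, ?_⟩
    exact (main γ hγ).2.2.1 β (lt_of_le_of_lt (le_max_left _ _) (lt_add_one _)) ξ
      (lt_of_le_of_lt (le_max_right _ _) (lt_add_one _))
  refine ⟨X, hXCcl, hIioX, ?_⟩
  constructor
  · exact fun y hy => hy.2
  constructor
  · -- cofinality
    intro z hz
    have hzc := hz.2.1.to_subtype
    have hF : ∀ u : ↥z, ∃ γ, γ < omega1 ∧ (u : Ordinal.{0}) ∈ (g γ).1 :=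
      fun u => capture u (hz.1 u.2)
    choose F hF1 hF2 using hF
    obtain ⟨b, hb, hbs⟩ := bound_fun F hF1
    refine ⟨(g b).1, ⟨(main b hb).1, hxX b hb, (hC1 (main b hb).1).2.1, (hC1 (main b hb).1).2.2⟩, ?_⟩
    intro u hu
    exact hxmono (F ⟨u, hu⟩) b (hbs ⟨u, hu⟩) hb (hF2 ⟨u, hu⟩)
  · -- closure
    intro D hD hDc hDne hDch
    have h1 : ⋃₀ D ∈ C := hC3 D (fun y hy => (hD hy).1) hDc hDne hDch
    refine ⟨h1, ?_, (hC1 h1).2.1, (hC1 h1).2.2⟩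
    exact Set.sUnion_subset fun y hy => (hD hy).2.1

/-- for `κ > ω₁`, every local club `S ⊆ [κ]^ω` is reflective. -/
theorem localClub_implies_reflective (κ : Cardinal) (hκ : Cardinal.aleph 1 < κ)
    (S : Set (Set Ordinal.{0})) (hS : S ⊆ countPow (Set.Iio κ.ord))
    (h : IsLocalClub (Set.Iio κ.ord) S) :
    IsReflective (Set.Iio κ.ord) S := by
  intro C hC
  obtain ⟨Ccl, hCcl, hprop⟩ := h
  have hκ' : omega1 < κ.ord := by
    rw [omega1]; exact Cardinal.ord_lt_ord.2 hκ
  obtain ⟨X, hXCcl, hIioX, hCX⟩ := phase1 hκ' hC hCcl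
  obtain ⟨D, hD, hDS⟩ := hprop X hXCcl
  have hE : IsClubIn X (D ∩ (C ∩ countPow X)) := club_inter hD hCX
  obtain ⟨f, hf, hfE⟩ := exists_chain_of_club hE hIioX
  exact ⟨f, hf, fun α hα => ⟨hDS (hfE α hα).1, (hfE α hα).2.1⟩⟩
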